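/- Let G be a connected simple undirected graph on vertex set {1,…,N} with N ≥ 3, let L be its Laplacian, let λ₂ = inf{ (vᵀLv)/(vᵀv) : v ∈ ℝ^N, v ≠ 0, 1ᵀv = 0 } (so λ₂ > 0), and let x : [0,∞) → ℝ^N be differentiable with γ := sup_{τ ≥ 0} ‖(I − (1/N)·1·1ᵀ)·x'(τ)‖₂ < ∞. Then for every ε > 0 there exists β₀ > 0 such that for every β ≥ β₀ and every differentiable x̂ : [0,∞) → ℝ^N satisfying x̂'(t) = x'(t) − β·L·x̂(t) with x̂(0) = x(0) + m, where m = (φᵀ − φ)·1 for some φ with φ_{ij} = 0 whenever {i,j} is not an edge of G, it holds for every agent i that limsup_{t→∞} |x̂_i(t) − (1/N)·Σ_{j=1}^N x_j(t)| ≤ ε. That is, the ultimate tracking-error bound of the masked DAC algorithm can be made arbitrarily small by choosing the gain β sufficiently large. -/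

import Mathlib

/-!
The disagreement vector `e = (I - 𝟙𝟙ᵀ/N) x̂` obeys `e' = (I - 𝟙𝟙ᵀ/N) x' - β L e`, because
`L𝟙 = 0` and `𝟙ᵀL = 0`; the same identity `𝟙ᵀL = 0` together with `𝟙ᵀm = 0` shows that the
sum of the estimates always equals the sum of the signals, so `e` is exactly the tracking error.
On the sum-zero subspace the Laplacian of a connected graph is coercive, `eᵀLe ≥ c ‖e‖²`, so the
energy `r = ‖e‖²` satisfies `r' ≤ 2γ √r - 2βc r ≤ γ²/(βc) - βc r`. Grönwall's inequality then
gives `limsup r ≤ (γ/(βc))²`, which is below `ε²` once `β ≥ γ/(cε)`.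
-/

open Matrix Filter Topology

theorem exists_pos_mul_le_of_sq_homogeneous {E : Type*} [NormedAddCommGroup E]
    [NormedSpace ℝ E] [ProperSpace E] {p q : E → ℝ} (hp : Continuous p) (hq : Continuous q)
    (hp_smul : ∀ (t : ℝ) v, p (t • v) = t ^ 2 * p v)
    (hq_smul : ∀ (t : ℝ) v, q (t • v) = t ^ 2 * q v)
    (hp_pos : ∀ v ≠ 0, 0 < p v) (hq_pos : ∀ v ≠ 0, 0 < q v) :
    ∃ c > 0, ∀ v, c * p v ≤ q v := by
  have hp0 : p 0 = 0 := by simpa using hp_smul 0 0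
  have hq0 : q 0 = 0 := by simpa using hq_smul 0 0
  rcases subsingleton_or_nontrivial E with hE | hE
  · exact ⟨1, one_pos, fun v => by simp [Subsingleton.elim v 0, hp0, hq0]⟩
  have hS : IsCompact (Metric.sphere (0 : E) 1) := isCompact_sphere 0 1
  have hne : (Metric.sphere (0 : E) 1).Nonempty := NormedSpace.sphere_nonempty.2 zero_le_one
  have hS0 : ∀ u ∈ Metric.sphere (0 : E) 1, u ≠ 0 := fun u hu h => by simp [h] at hu
  obtain ⟨u₀, hu₀, hq_min⟩ := hS.exists_isMinOn hne hq.continuousOn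
  obtain ⟨u₁, hu₁, hp_max⟩ := hS.exists_isMaxOn hne hp.continuousOn
  have hqu₀ := hq_pos u₀ (hS0 u₀ hu₀)
  have hpu₁ := hp_pos u₁ (hS0 u₁ hu₁)
  refine ⟨q u₀ / p u₁, by positivity, fun v => ?_⟩
  rcases eq_or_ne v 0 with rfl | hv
  · simp [hp0, hq0]
  set u := ‖v‖⁻¹ • v
  have hu : u ∈ Metric.sphere (0 : E) 1 := by simp [u, norm_smul, hv]
  have hvu : v = ‖v‖ • u := by simp [u, smul_smul, hv]
  rw [hvu, hp_smul, hq_smul]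
  calc q u₀ / p u₁ * (‖v‖ ^ 2 * p u) ≤ q u₀ / p u₁ * (‖v‖ ^ 2 * p u₁) := by
        gcongr; exact hp_max hu
    _ = ‖v‖ ^ 2 * q u₀ := by field_simp
    _ ≤ ‖v‖ ^ 2 * q u := by gcongr; exact hq_min hu

section DotProduct

variable {n : Type*} [Fintype n]

theorem sq_apply_le_dotProduct_self (v : n → ℝ) (i : n) : v i ^ 2 ≤ v ⬝ᵥ v := by
  rw [sq]
  exact Finset.single_le_sum (f := fun j => v j * v j) (fun j _ => mul_self_nonneg (v j))
    (Finset.mem_univ i)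

theorem dotProduct_sq_le (v w : n → ℝ) : (v ⬝ᵥ w) ^ 2 ≤ (v ⬝ᵥ v) * (w ⬝ᵥ w) := by
  simpa only [dotProduct, ← sq] using Finset.sum_mul_sq_le_sq_mul_sq Finset.univ v w

theorem sum_mulVec_eq_zero {A : Matrix n n ℝ} (hA : 1 ᵥ* A = 0) (v : n → ℝ) :
    ∑ i, (A *ᵥ v) i = 0 := by
  rw [← dotProduct_one, dotProduct_comm, dotProduct_mulVec, hA, zero_dotProduct]

theorem sum_transpose_sub_mulVec_one (φ : Matrix n n ℝ) : ∑ i, ((φᵀ - φ) *ᵥ 1) i = 0 := by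
  rw [← dotProduct_one, dotProduct_comm, sub_mulVec, dotProduct_sub, dotProduct_mulVec,
    vecMul_transpose, dotProduct_comm, sub_self]

theorem two_mul_dotProduct_sub_mulVec_le {A : Matrix n n ℝ} {e p : n → ℝ} {k γ : ℝ}
    (hk : 0 < k) (hA : k * (e ⬝ᵥ e) ≤ e ⬝ᵥ (A *ᵥ e)) (hp : p ⬝ᵥ p ≤ γ ^ 2) :
    2 * (e ⬝ᵥ (p - A *ᵥ e)) ≤ -k * (e ⬝ᵥ e) + γ ^ 2 / k := by
  have hee : 0 ≤ e ⬝ᵥ e := dotProduct_self_star_nonneg e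
  have hyoung : 2 * (e ⬝ᵥ p) ≤ k * (e ⬝ᵥ e) + γ ^ 2 / k := by
    refine two_mul_le_add_of_sq_le_mul (by positivity) (by positivity) ?_
    calc (e ⬝ᵥ p) ^ 2 ≤ (e ⬝ᵥ e) * (p ⬝ᵥ p) := dotProduct_sq_le e p
      _ ≤ (e ⬝ᵥ e) * γ ^ 2 := by gcongr
      _ = k * (e ⬝ᵥ e) * (γ ^ 2 / k) := by field_simp
  rw [dotProduct_sub]
  linarith

theorem HasDerivAt.matrix_mulVec {m : Type*} [Fintype m] {f : ℝ → n → ℝ} {f' : n → ℝ} {t : ℝ}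
    (A : Matrix m n ℝ) (hf : HasDerivAt f f' t) : HasDerivAt (fun s => A *ᵥ f s) (A *ᵥ f') t :=
  ((Matrix.mulVecLin A).toContinuousLinearMap.hasFDerivAt (x := f t)).comp_hasDerivAt t hf

theorem HasDerivAt.dotProduct {f g : ℝ → n → ℝ} {f' g' : n → ℝ} {t : ℝ}
    (hf : HasDerivAt f f' t) (hg : HasDerivAt g g' t) :
    HasDerivAt (fun s => f s ⬝ᵥ g s) (f' ⬝ᵥ g t + f t ⬝ᵥ g') t := by
  rw [_root_.dotProduct, _root_.dotProduct, ← Finset.sum_add_distrib]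
  exact HasDerivAt.fun_sum fun i _ => (hasDerivAt_pi.1 hf i).fun_mul (hasDerivAt_pi.1 hg i)

theorem HasDerivAt.dotProduct_self {f : ℝ → n → ℝ} {f' : n → ℝ} {t : ℝ}
    (hf : HasDerivAt f f' t) : HasDerivAt (fun s => f s ⬝ᵥ f s) (2 * (f t ⬝ᵥ f')) t :=
  (hf.dotProduct hf).congr_deriv (by rw [dotProduct_comm f', two_mul])

end DotProduct

section Centering

variable (n : Type*) [Fintype n] [DecidableEq n]

noncomputable def centeringMatrix : Matrix n n ℝ :=
  1 - (Fintype.card n : ℝ)⁻¹ • of fun _ _ => 1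

variable {n}

theorem centeringMatrix_mulVec (v : n → ℝ) :
    centeringMatrix n *ᵥ v = v - ((∑ i, v i) / Fintype.card n) • 1 := by
  rw [centeringMatrix, sub_mulVec, one_mulVec, smul_mulVec]
  ext i
  simp [mulVec, dotProduct, div_eq_inv_mul]

theorem sum_centeringMatrix_mulVec (v : n → ℝ) : ∑ i, (centeringMatrix n *ᵥ v) i = 0 := by
  rcases isEmpty_or_nonempty n with hn | hn
  · simp
  simp [centeringMatrix_mulVec, Finset.sum_sub_distrib, mul_div_cancel₀]

theorem centeringMatrix_mulVec_of_sum_eq_zero {v : n → ℝ} (hv : ∑ i, v i = 0) :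
    centeringMatrix n *ᵥ v = v := by
  simp [centeringMatrix_mulVec, hv]

theorem mulVec_centeringMatrix_mulVec {A : Matrix n n ℝ} (hA : A *ᵥ 1 = 0) (v : n → ℝ) :
    A *ᵥ (centeringMatrix n *ᵥ v) = A *ᵥ v := by
  rw [centeringMatrix_mulVec, mulVec_sub, mulVec_smul, hA, smul_zero, sub_zero]

theorem hasDerivAt_centeringMatrix_mulVec {A : Matrix n n ℝ} (hA₁ : A *ᵥ 1 = 0)
    (hA₂ : 1 ᵥ* A = 0) {f : ℝ → n → ℝ} {v : n → ℝ} {t : ℝ}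
    (hf : HasDerivAt f (v - A *ᵥ f t) t) :
    HasDerivAt (fun s => centeringMatrix n *ᵥ f s)
      (centeringMatrix n *ᵥ v - A *ᵥ (centeringMatrix n *ᵥ f t)) t := by
  refine (hf.matrix_mulVec _).congr_deriv ?_
  rw [mulVec_sub, centeringMatrix_mulVec_of_sum_eq_zero (sum_mulVec_eq_zero hA₂ _),
    mulVec_centeringMatrix_mulVec hA₁]

end Centering

section Asymptotics

theorem le_gronwallBound_of_hasDerivAt {f f' : ℝ → ℝ} {K ε : ℝ}
    (hf : ∀ t ≥ 0, HasDerivAt f (f' t) t) (bound : ∀ t ≥ 0, f' t ≤ K * f t + ε) {t : ℝ}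
    (ht : 0 ≤ t) : f t ≤ gronwallBound (f 0) K ε t := by
  simpa using le_gronwallBound_of_liminf_deriv_right_le (f' := f') (b := t)
    (fun s hs => (hf s hs.1).continuousAt.continuousWithinAt)
    (fun s hs r hr => (hf s hs.1).hasDerivWithinAt.liminf_right_slope_le hr) le_rfl
    (fun s hs => bound s hs.1) t ⟨ht, le_rfl⟩

theorem tendsto_gronwallBound_atTop {δ K ε : ℝ} (hK : K < 0) :
    Tendsto (gronwallBound δ K ε) atTop (𝓝 (-(ε / K))) := by
  rw [gronwallBound_of_K_ne_0 hK.ne]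
  have hexp : Tendsto (fun x => Real.exp (K * x)) atTop (𝓝 0) :=
    Real.tendsto_exp_atBot.comp (tendsto_id.const_mul_atTop_of_neg hK)
  simpa using (hexp.const_mul δ).add ((hexp.sub_const 1).const_mul (ε / K))

theorem limsup_abs_le_sqrt {α : Type*} {F : Filter α} [F.NeBot] {f g : α → ℝ} {l : ℝ}
    (hfg : ∀ᶠ t in F, f t ^ 2 ≤ g t) (hg : Tendsto g F (𝓝 l)) :
    limsup (fun t => |f t|) F ≤ √l := by
  have hsqrt := hg.sqrt
  calc limsup (fun t => |f t|) F ≤ limsup (fun t => √(g t)) F :=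
        limsup_le_limsup (hfg.mono fun t ht => Real.abs_le_sqrt ht)
          (isBoundedUnder_of_eventually_ge
            (Eventually.of_forall fun t => abs_nonneg _)).isCoboundedUnder_le
          hsqrt.isBoundedUnder_le
    _ = √l := hsqrt.limsup_eq

theorem limsup_abs_apply_le_of_hasDerivAt_sub_mulVec {n : Type*} [Fintype n]
    {A : Matrix n n ℝ} {k γ : ℝ} (hk : 0 < k) (hγ : 0 ≤ γ) {e p : ℝ → n → ℝ}
    (he : ∀ t ≥ 0, HasDerivAt e (p t - A *ᵥ e t) t)
    (hA : ∀ t ≥ 0, k * (e t ⬝ᵥ e t) ≤ e t ⬝ᵥ (A *ᵥ e t))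
    (hp : ∀ t ≥ 0, p t ⬝ᵥ p t ≤ γ ^ 2) (i : n) :
    limsup (fun t => |e t i|) atTop ≤ γ / k := by
  have hr := fun t (ht : t ≥ 0) => (he t ht).dotProduct_self
  have hr_le := fun t (ht : t ≥ 0) =>
    le_gronwallBound_of_hasDerivAt hr
      (fun s hs => two_mul_dotProduct_sub_mulVec_le hk (hA s hs) (hp s hs)) ht
  calc limsup (fun t => |e t i|) atTop ≤ √(-(γ ^ 2 / k / -k)) :=
        limsup_abs_le_sqrt
          ((eventually_ge_atTop 0).mono fun t ht =>
            (sq_apply_le_dotProduct_self (e t) i).trans (hr_le t ht))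
          (tendsto_gronwallBound_atTop (neg_lt_zero.2 hk))
    _ = γ / k := by
        rw [div_neg, neg_neg, div_div, ← sq, ← div_pow, Real.sqrt_sq (by positivity)]

end Asymptotics

namespace SimpleGraph

variable {V : Type*} [Fintype V] [DecidableEq V] (G : SimpleGraph V) [DecidableRel G.Adj]

theorem lapMatrix_mulVec_one : G.lapMatrix ℝ *ᵥ 1 = 0 := G.lapMatrix_mulVec_const_eq_zero

theorem one_vecMul_lapMatrix : 1 ᵥ* G.lapMatrix ℝ = 0 := by
  rw [← (G.isSymm_lapMatrix (R := ℝ)).eq, vecMul_transpose, lapMatrix_mulVec_one]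

theorem lapMatrix_quadForm_nonneg (v : V → ℝ) : 0 ≤ v ⬝ᵥ (G.lapMatrix ℝ *ᵥ v) := by
  simpa using (G.posSemidef_lapMatrix ℝ).dotProduct_mulVec_nonneg v

variable {G}

theorem Connected.eq_zero_of_lapMatrix_quadForm_eq_zero (hG : G.Connected) {v : V → ℝ}
    (hsum : ∑ i, v i = 0) (hv : v ⬝ᵥ (G.lapMatrix ℝ *ᵥ v) = 0) : v = 0 := by
  have hconst := (G.lapMatrix_toLinearMap₂'_apply'_eq_zero_iff_forall_reachable v).1
    (by rwa [Matrix.toLinearMap₂'_apply'])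
  obtain ⟨i₀⟩ := hG.nonempty
  have hv_eq : ∀ i, v i = v i₀ := fun i => hconst i i₀ (hG.preconnected i i₀)
  have hcard : (Fintype.card V : ℝ) ≠ 0 := by
    exact_mod_cast (Fintype.card_pos_iff.2 hG.nonempty).ne'
  have hi₀ : v i₀ = 0 := by simpa [hv_eq, hcard] using hsum
  ext i
  rw [hv_eq, hi₀, Pi.zero_apply]

theorem Connected.exists_pos_mul_dotProduct_self_le_lapMatrix (hG : G.Connected) :
    ∃ c > 0, ∀ v : V → ℝ, ∑ i, v i = 0 → c * (v ⬝ᵥ v) ≤ v ⬝ᵥ (G.lapMatrix ℝ *ᵥ v) := by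
  -- adding `(∑ v)²` makes the form positive definite without changing it where `∑ v = 0`
  obtain ⟨c, hc, h⟩ := exists_pos_mul_le_of_sq_homogeneous (p := fun v : V → ℝ => v ⬝ᵥ v)
    (q := fun v => v ⬝ᵥ (G.lapMatrix ℝ *ᵥ v) + (∑ i, v i) ^ 2) (by fun_prop) (by fun_prop)
    (fun t v => by simp only [smul_dotProduct, dotProduct_smul, smul_eq_mul]; ring)
    (fun t v => by
      simp only [mulVec_smul, smul_dotProduct, dotProduct_smul, smul_eq_mul, Pi.smul_apply,
        ← Finset.mul_sum]
      ring)
    (fun v hv => by simpa using dotProduct_star_self_pos_iff.2 hv)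
    (fun v hv => by
      have hquad := G.lapMatrix_quadForm_nonneg v
      by_contra! hq
      have hsum : ∑ i, v i = 0 := by nlinarith [sq_nonneg (∑ i, v i)]
      exact hv (hG.eq_zero_of_lapMatrix_quadForm_eq_zero hsum
        (by nlinarith [sq_nonneg (∑ i, v i)])))
  exact ⟨c, hc, fun v hv => by simpa [hv] using h v⟩

variable (G)

theorem sum_eq_of_hasDerivAt_sub_lapMatrix {β : ℝ} {x xhat : ℝ → V → ℝ}
    (hx : Differentiable ℝ x)
    (hode : ∀ t ≥ 0, HasDerivAt xhat (deriv x t - β • (G.lapMatrix ℝ *ᵥ xhat t)) t)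
    (h0 : ∑ i, xhat 0 i = ∑ i, x 0 i) : ∀ t ≥ 0, ∑ i, xhat t i = ∑ i, x t i := by
  intro t ht
  have hderiv : ∀ s ≥ 0, HasDerivAt (fun s => ∑ i, (xhat s - x s) i) 0 s := fun s hs =>
    (HasDerivAt.fun_sum fun i _ =>
      hasDerivAt_pi.1 ((hode s hs).sub (hx s).hasDerivAt) i).congr_deriv
      (by simp [← Finset.mul_sum, sum_mulVec_eq_zero G.one_vecMul_lapMatrix])
  have hconst := constant_of_has_deriv_right_zero (b := t)
    (fun s hs => (hderiv s hs.1).continuousAt.continuousWithinAt)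
    (fun s hs => (hderiv s hs.1).hasDerivWithinAt) t ⟨ht, le_rfl⟩
  simp only [Pi.sub_apply, Finset.sum_sub_distrib, h0, sub_self] at hconst
  linarith

theorem limsup_abs_centeringMatrix_mulVec_le {c β γ : ℝ} (hc : 0 < c) (hβ : 0 < β)
    (hγ : 0 ≤ γ)
    (hgap : ∀ v : V → ℝ, ∑ i, v i = 0 → c * (v ⬝ᵥ v) ≤ v ⬝ᵥ (G.lapMatrix ℝ *ᵥ v))
    {x xhat : ℝ → V → ℝ}
    (hode : ∀ t ≥ 0, HasDerivAt xhat (deriv x t - β • (G.lapMatrix ℝ *ᵥ xhat t)) t)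
    (hx' : ∀ t ≥ 0,
      (centeringMatrix V *ᵥ deriv x t) ⬝ᵥ (centeringMatrix V *ᵥ deriv x t) ≤ γ ^ 2)
    (i : V) : limsup (fun t => |(centeringMatrix V *ᵥ xhat t) i|) atTop ≤ γ / (β * c) := by
  set A := β • G.lapMatrix ℝ
  have hA₁ : A *ᵥ 1 = 0 := by rw [smul_mulVec, G.lapMatrix_mulVec_one, smul_zero]
  have hA₂ : 1 ᵥ* A = 0 := by rw [vecMul_smul, G.one_vecMul_lapMatrix, smul_zero]
  refine limsup_abs_apply_le_of_hasDerivAt_sub_mulVec (mul_pos hβ hc) hγ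
    (fun t ht => hasDerivAt_centeringMatrix_mulVec hA₁ hA₂ ?_) (fun t _ => ?_) hx' i
  · simpa only [A, smul_mulVec] using hode t ht
  · rw [smul_mulVec, dotProduct_smul, smul_eq_mul, mul_assoc]
    exact mul_le_mul_of_nonneg_left (hgap _ (sum_centeringMatrix_mulVec _)) hβ.le

end SimpleGraph

theorem masked_dac_bound_arbitrarily_small_general
    (N : ℕ) (G : SimpleGraph (Fin N)) [DecidableRel G.Adj]
    (hconn : G.Connected)
    (L : Matrix (Fin N) (Fin N) ℝ) (hL : L = G.lapMatrix ℝ)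
    (x : ℝ → Fin N → ℝ) (hx : Differentiable ℝ x)
    (γ : ℝ)
    (hγ : IsLUB {r : ℝ | ∃ τ ≥ (0 : ℝ), r = Real.sqrt (∑ i,
        ((((1 : Matrix (Fin N) (Fin N) ℝ)
            - (N : ℝ)⁻¹ • Matrix.of (fun _ _ => (1 : ℝ))) *ᵥ deriv x τ) i) ^ 2)} γ) :
    ∀ ε > (0 : ℝ), ∃ β₀ > (0 : ℝ), ∀ β ≥ β₀,
      ∀ xhat : ℝ → Fin N → ℝ, ∀ φ : Matrix (Fin N) (Fin N) ℝ,
        (∀ i j, (¬ G.Adj i j ∨ i = j) → φ i j = 0) →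
        xhat 0 = x 0 + (φ.transpose - φ) *ᵥ (fun _ => (1 : ℝ)) →
        (∀ t ≥ (0 : ℝ), HasDerivAt xhat (deriv x t - β • (L *ᵥ xhat t)) t) →
        ∀ i : Fin N,
          limsup (fun t : ℝ => |xhat t i - (∑ j, x t j) / N|) atTop ≤ ε := by
  intro ε hε
  subst hL
  obtain ⟨c, hc, hgap⟩ := hconn.exists_pos_mul_dotProduct_self_le_lapMatrix
  have hγ₀ : 0 ≤ γ := (Real.sqrt_nonneg _).trans (hγ.1 ⟨0, le_rfl, rfl⟩)
  have hx' : ∀ t ≥ 0, (centeringMatrix (Fin N) *ᵥ deriv x t) ⬝ᵥ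
      (centeringMatrix (Fin N) *ᵥ deriv x t) ≤ γ ^ 2 := fun t ht => by
    simpa [centeringMatrix, dotProduct, sq] using (Real.sqrt_le_left hγ₀).1 (hγ.1 ⟨t, ht, rfl⟩)
  refine ⟨max (γ / (c * ε)) 1, by positivity, fun β hβ xhat φ _ h0 hode i => ?_⟩
  have hβ₀ : 0 < β := one_pos.trans_le (le_of_max_le_right hβ)
  have hsum := G.sum_eq_of_hasDerivAt_sub_lapMatrix hx hode
    (by simp only [h0, Pi.add_apply, Finset.sum_add_distrib, add_eq_left]
        exact sum_transpose_sub_mulVec_one φ)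
  calc limsup (fun t : ℝ => |xhat t i - (∑ j, x t j) / N|) atTop
      = limsup (fun t => |(centeringMatrix (Fin N) *ᵥ xhat t) i|) atTop :=
        limsup_congr ((eventually_ge_atTop 0).mono fun t ht => by
          simp [centeringMatrix_mulVec, hsum t ht])
    _ ≤ γ / (β * c) := G.limsup_abs_centeringMatrix_mulVec_le hc hβ₀ hγ₀ hgap hode hx' i
    _ ≤ ε := by
        rw [div_le_iff₀ (mul_pos hβ₀ hc)]
        have := (div_le_iff₀ (mul_pos hc hε)).1 (le_of_max_le_left hβ)
        linarith

/-- the ultimate tracking-error bound of the masked DAC algorithm can be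
made arbitrarily small by choosing the gain `β` sufficiently large: for every `ε > 0`
there is `β₀ > 0` such that for every `β ≥ β₀`, every mask `m = (φᵀ − φ)·1` supported
on the edges of `G`, and every solution `xhat` of the masked DAC dynamics with
`xhat(0) = x(0) + m`, each agent's estimate is ultimately within `ε` of the average. -/
theorem masked_dac_bound_arbitrarily_small
    (N : ℕ) (hN : 3 ≤ N) (G : SimpleGraph (Fin N)) [DecidableRel G.Adj]
    (hconn : G.Connected)
    (L : Matrix (Fin N) (Fin N) ℝ) (hL : L = G.lapMatrix ℝ)
    (lam2 : ℝ)
    (hlam2 : lam2 = sInf {r : ℝ | ∃ v : Fin N → ℝ, v ≠ 0 ∧ (∑ i, v i) = 0 ∧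
        r = (v ⬝ᵥ (L *ᵥ v)) / (v ⬝ᵥ v)})
    (x : ℝ → Fin N → ℝ) (hx : Differentiable ℝ x)
    (γ : ℝ)
    (hγ : IsLUB {r : ℝ | ∃ τ ≥ (0 : ℝ), r = Real.sqrt (∑ i,
        ((((1 : Matrix (Fin N) (Fin N) ℝ)
            - (N : ℝ)⁻¹ • Matrix.of (fun _ _ => (1 : ℝ))) *ᵥ deriv x τ) i) ^ 2)} γ) :
    ∀ ε > (0 : ℝ), ∃ β₀ > (0 : ℝ), ∀ β ≥ β₀,
      ∀ xhat : ℝ → Fin N → ℝ, ∀ φ : Matrix (Fin N) (Fin N) ℝ,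
        (∀ i j, (¬ G.Adj i j ∨ i = j) → φ i j = 0) →
        xhat 0 = x 0 + (φ.transpose - φ) *ᵥ (fun _ => (1 : ℝ)) →
        (∀ t ≥ (0 : ℝ), HasDerivAt xhat (deriv x t - β • (L *ᵥ xhat t)) t) →
        ∀ i : Fin N,
          limsup (fun t : ℝ => |xhat t i - (∑ j, x t j) / N|) atTop ≤ ε :=
  masked_dac_bound_arbitrarily_small_general N G hconn L hL x hx γ hγ
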